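/- arXiv:2208.03068 — 2 statements merged into one kernel-verified Lean document; each statement's English description precedes it below -/
import Mathlib

section
/- Let α be the real root of X^3 − X^2 − X − 1 with α > 1 and a = 1/(−α^2 + 4α − 1). Then a and α are multiplicatively independent, i.e., there are no nonzero integers x, y with a^x·α^y = 1. -/
/-!
Put `c = -α² + 4α - 1 = 1/a`. After inverting and separating signs, a relation `a^x α^y = 1`
becomes `c^m α^k = α^n` with `m = |x|`, so `α` is a root of the integer polynomial
`(-X² + 4X - 1)^m X^k - X^n`. The minimal polynomial `X³ - X² - X - 1` is monic, so it divides
this polynomial in `ℤ[X]`; evaluating at `X = 1` gives `-2 ∣ 2^m - 1`, which forces `m = 0`.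
-/

open Polynomial

noncomputable def tribonacciPoly : ℤ[X] := X ^ 3 - X ^ 2 - X - 1

theorem tribonacciPoly_monic : tribonacciPoly.Monic := by
  unfold tribonacciPoly; monicity!

theorem tribonacciPoly_natDegree : tribonacciPoly.natDegree = 3 := by
  unfold tribonacciPoly; compute_degree!

theorem aeval_tribonacciPoly {A : Type*} [CommRing A] (α : A) :
    aeval α tribonacciPoly = α ^ 3 - α ^ 2 - α - 1 := by
  simp [tribonacciPoly]

theorem irreducible_map_tribonacciPoly :
    Irreducible (tribonacciPoly.map (algebraMap ℤ ℚ)) := by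
  have hmonic := tribonacciPoly_monic.map (algebraMap ℤ ℚ)
  have hdeg : (tribonacciPoly.map (algebraMap ℤ ℚ)).natDegree = 3 := by
    rw [natDegree_map_eq_of_injective (RingHom.injective_int _), tribonacciPoly_natDegree]
  rw [hmonic.irreducible_iff_roots_eq_zero_of_degree_le_three (by omega) hdeg.le,
    Multiset.eq_zero_iff_forall_notMem]
  intro r hr
  rw [mem_roots hmonic.ne_zero, IsRoot, eval_map_algebraMap] at hr
  obtain ⟨n, rfl⟩ := isInteger_of_is_root_of_monic tribonacciPoly_monic hr
  rw [aeval_algebraMap_apply, aeval_tribonacciPoly,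
    map_eq_zero_iff _ (RingHom.injective_int _)] at hr
  have hunit : n * (n ^ 2 - n - 1) = 1 := by linear_combination hr
  rcases Int.eq_one_or_neg_one_of_mul_eq_one hunit with rfl | rfl <;> norm_num at hr

section
variable {K : Type*} [Field K] [CharZero K] {α : K}

theorem tribonacciPoly_dvd_of_aeval_eq_zero (hα : α ^ 3 = α ^ 2 + α + 1) {P : ℤ[X]}
    (hP : aeval α P = 0) : tribonacciPoly ∣ P := by
  have hmin : tribonacciPoly.map (algebraMap ℤ ℚ) = minpoly ℚ α :=
    minpoly.eq_of_irreducible_of_monic irreducible_map_tribonacciPoly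
      (by rw [aeval_map_algebraMap, aeval_tribonacciPoly]; linear_combination hα)
      (tribonacciPoly_monic.map _)
  rw [← map_dvd_map (algebraMap ℤ ℚ) (RingHom.injective_int _) tribonacciPoly_monic, hmin]
  exact minpoly.dvd ℚ α (by rwa [aeval_map_algebraMap])

theorem eq_zero_of_mul_pow_eq_pow (hα : α ^ 3 = α ^ 2 + α + 1) {m k n : ℕ}
    (h : (-α ^ 2 + 4 * α - 1) ^ m * α ^ k = α ^ n) : m = 0 := by
  have hdvd := eval_dvd (x := 1) <| tribonacciPoly_dvd_of_aeval_eq_zero hα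
    (P := (-X ^ 2 + 4 * X - 1) ^ m * X ^ k - X ^ n) (by simp [map_ofNat, h])
  norm_num [tribonacciPoly] at hdvd
  rw [← even_iff_two_dvd, Int.even_sub_one, Int.even_pow] at hdvd
  simpa using hdvd

theorem eq_zero_of_pow_eq_zpow (hα : α ^ 3 = α ^ 2 + α + 1) {m : ℕ} {y : ℤ}
    (h : (-α ^ 2 + 4 * α - 1) ^ m = α ^ y) : m = 0 := by
  obtain ⟨n, rfl | rfl⟩ := Int.eq_nat_or_neg y
  · exact eq_zero_of_mul_pow_eq_pow hα (k := 0) (by simpa using h)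
  · have hα0 : α ≠ 0 := by rintro rfl; norm_num at hα
    refine eq_zero_of_mul_pow_eq_pow hα (k := n) (n := 0) ?_
    rw [h, zpow_neg, zpow_natCast, inv_mul_cancel₀ (pow_ne_zero n hα0), pow_zero]

theorem eq_zero_of_zpow_eq_zpow (hα : α ^ 3 = α ^ 2 + α + 1) {x y : ℤ}
    (h : (-α ^ 2 + 4 * α - 1) ^ x = α ^ y) : x = 0 := by
  obtain ⟨m, rfl | rfl⟩ := Int.eq_nat_or_neg x
  · exact_mod_cast eq_zero_of_pow_eq_zpow hα (by simpa using h)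
  · have hm : m = 0 := eq_zero_of_pow_eq_zpow hα (y := -y) <| by
      rw [zpow_neg, ← h, zpow_neg, inv_inv, zpow_natCast]
    simp [hm]
end

theorem tribonacci_mult_indep (α : ℝ) (hα : α ^ 3 = α ^ 2 + α + 1) (hα1 : 1 < α) :
    ∀ x y : ℤ, (1 / (-α ^ 2 + 4 * α - 1)) ^ x * α ^ y = 1 → x = 0 ∧ y = 0 := by
  intro x y h
  have hc : -α ^ 2 + 4 * α - 1 ≠ 0 := by nlinarith
  rw [one_div, inv_zpow, inv_mul_eq_one₀ (zpow_ne_zero _ hc)] at h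
  obtain rfl := eq_zero_of_zpow_eq_zpow hα h
  rw [zpow_zero, eq_comm, zpow_eq_one_iff_right₀ (by positivity) hα1.ne'] at h
  exact ⟨rfl, h⟩
end

section
/- Let T_n be the Tribonacci sequence with T_1 = T_2 = 1, T_3 = 2, T_n = T_{n−1} + T_{n−2} + T_{n−3} for n ≥ 4. Suppose n_1 > n_2 ≥ 2, b ≥ 2 and m_1 > m_2 ≥ 1 are integers with T_{n_1} − T_{n_2} = b^{m_1} − b^{m_2}. Then b^{m_1} ≥ 0.13·α^{n_1}, where α > 1 is the real root of X^3 − X^2 − X − 1. -/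
/-!
Since `b ^ m₂ ≥ 0`, monotonicity of `T` gives `b ^ m₁ ≥ T n₁ - T n₂ ≥ T n₁ - T (n₁ - 1)`, and for
`n ≥ 4` this gap is `T (n - 2) + T (n - 3)`. Induction along the recurrence gives `T n ≥ 0.29 α ^ n`, and `0.29 (α + 1) ≥ 0.13 α ^ 3` because `α < 1.85`.
-/

section TribonacciRecurrence

variable {T : ℕ → ℤ} (hTrec : ∀ n, 4 ≤ n → T n = T (n - 1) + T (n - 2) + T (n - 3))
include hTrec

lemma tribonacci_add_four (k : ℕ) : T (k + 4) = T (k + 3) + T (k + 2) + T (k + 1) :=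
  hTrec (k + 4) (by omega)

lemma tribonacci_monotoneOn (h1 : 0 ≤ T 1) (h12 : T 1 ≤ T 2) (h23 : T 2 ≤ T 3) :
    MonotoneOn T (Set.Ici 1) := by
  have chain : ∀ k, 0 ≤ T (k + 1) ∧ T (k + 1) ≤ T (k + 2) ∧ T (k + 2) ≤ T (k + 3) := by
    intro k
    induction k with
    | zero => exact ⟨h1, h12, h23⟩
    | succ k ih =>
      have := tribonacci_add_four hTrec k
      show 0 ≤ T (k + 2) ∧ T (k + 2) ≤ T (k + 3) ∧ T (k + 3) ≤ T (k + 4)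
      refine ⟨?_, ?_, ?_⟩ <;> omega
  refine monotoneOn_nat_Ici_of_le_succ fun n hn => ?_
  obtain ⟨k, rfl⟩ := Nat.exists_eq_add_of_le' hn
  exact (chain k).2.1

lemma mul_pow_le_tribonacci {α c : ℝ} (hα : α ^ 3 = α ^ 2 + α + 1)
    (h1 : c * α ≤ T 1) (h2 : c * α ^ 2 ≤ T 2) (h3 : c * α ^ 3 ≤ T 3) :
    ∀ n, 1 ≤ n → c * α ^ n ≤ T n := by
  have triple : ∀ k, c * α ^ (k + 1) ≤ T (k + 1) ∧ c * α ^ (k + 2) ≤ T (k + 2) ∧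
      c * α ^ (k + 3) ≤ T (k + 3) := by
    intro k
    induction k with
    | zero => exact ⟨by simpa using h1, h2, h3⟩
    | succ k ih =>
      obtain ⟨ih1, ih2, ih3⟩ := ih
      have hT : (T (k + 4) : ℝ) = T (k + 3) + T (k + 2) + T (k + 1) := by
        exact_mod_cast tribonacci_add_four hTrec k
      have hpow : α ^ (k + 4) = α ^ (k + 3) + α ^ (k + 2) + α ^ (k + 1) := by
        linear_combination α ^ (k + 1) * hα
      refine ⟨ih2, ih3, ?_⟩
      rw [hT, hpow]
      linarith
  intro n hn
  obtain ⟨k, rfl⟩ := Nat.exists_eq_add_of_le' hn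
  exact (triple k).1

end TribonacciRecurrence

lemma tribonacci_constant_lt {α : ℝ} (hα : α ^ 3 = α ^ 2 + α + 1) (hα1 : 1 < α) : α < 1.85 := by
  nlinarith [sq_nonneg (α - 1), sq_nonneg (α + 1)]

lemma mul_pow_le_tribonacci_sub_pred {T : ℕ → ℤ}
    (hT1 : T 1 = 1) (hT2 : T 2 = 1) (hT3 : T 3 = 2)
    (hTrec : ∀ n, 4 ≤ n → T n = T (n - 1) + T (n - 2) + T (n - 3))
    {α : ℝ} (hα : α ^ 3 = α ^ 2 + α + 1) (hα1 : 1 < α) {n : ℕ} (hn : 3 ≤ n) :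
    0.13 * α ^ n ≤ T n - T (n - 1) := by
  have hα85 := tribonacci_constant_lt hα hα1
  obtain ⟨k, rfl | rfl⟩ : ∃ k, n = 3 ∨ n = k + 4 := ⟨n - 4, by omega⟩
  · rw [show 3 - 1 = 2 from rfl, hT2, hT3, hα]
    push_cast
    nlinarith
  · have hT : (T (k + 4) : ℝ) - T (k + 4 - 1) = T (k + 2) + T (k + 1) := by
      rw [show k + 4 - 1 = k + 3 from rfl]
      exact_mod_cast (by linarith [tribonacci_add_four hTrec k] :
        T (k + 4) - T (k + 3) = T (k + 2) + T (k + 1))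
    have lower := mul_pow_le_tribonacci hTrec (c := 0.29) hα
      (by rw [hT1]; push_cast; linarith) (by rw [hT2]; push_cast; nlinarith)
      (by rw [hT3, hα]; push_cast; nlinarith)
    have hαk : 0 < α ^ (k + 1) := pow_pos (by linarith) _
    have hcoeff : 0.13 * (α ^ 2 + α + 1) ≤ 0.29 * (α + 1) := by nlinarith
    calc 0.13 * α ^ (k + 4) = α ^ (k + 1) * (0.13 * (α ^ 2 + α + 1)) := by
          rw [← hα]; ring
      _ ≤ α ^ (k + 1) * (0.29 * (α + 1)) := by gcongr
      _ = 0.29 * α ^ (k + 2) + 0.29 * α ^ (k + 1) := by ring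
      _ ≤ T (k + 2) + T (k + 1) := add_le_add (lower _ (by omega)) (lower _ (by omega))
      _ = T (k + 4) - T (k + 4 - 1) := hT.symm

theorem tribonacci_pillai_lower_general (T : ℕ → ℤ)
    (hT1 : T 1 = 1) (hT2 : T 2 = 1) (hT3 : T 3 = 2)
    (hTrec : ∀ n, 4 ≤ n → T n = T (n - 1) + T (n - 2) + T (n - 3))
    (α : ℝ) (hα : α ^ 3 = α ^ 2 + α + 1) (hα1 : 1 < α)
    (n₁ n₂ m₁ m₂ : ℕ) (b : ℤ)
    (hn₂ : 2 ≤ n₂) (hn : n₂ < n₁) (hb : 2 ≤ b)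
    (heq : T n₁ - T n₂ = b ^ m₁ - b ^ m₂) :
    (b : ℝ) ^ m₁ ≥ 0.13 * α ^ n₁ := by
  have hmono := tribonacci_monotoneOn hTrec (by omega) (by omega) (by omega)
  have hT₂ : T n₂ ≤ T (n₁ - 1) :=
    hmono (Set.mem_Ici.2 (by omega)) (Set.mem_Ici.2 (by omega)) (by omega)
  have hbm : (0 : ℤ) ≤ b ^ m₂ := pow_nonneg (by omega) _
  have hgap : (T n₁ : ℝ) - T (n₁ - 1) ≤ (b : ℝ) ^ m₁ := by
    exact_mod_cast (by linarith : T n₁ - T (n₁ - 1) ≤ b ^ m₁)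
  linarith [mul_pow_le_tribonacci_sub_pred hT1 hT2 hT3 hTrec hα hα1 (n := n₁) (by omega)]

theorem tribonacci_pillai_lower (T : ℕ → ℤ)
    (hT1 : T 1 = 1) (hT2 : T 2 = 1) (hT3 : T 3 = 2)
    (hTrec : ∀ n, 4 ≤ n → T n = T (n - 1) + T (n - 2) + T (n - 3))
    (α : ℝ) (hα : α ^ 3 = α ^ 2 + α + 1) (hα1 : 1 < α)
    (n₁ n₂ m₁ m₂ : ℕ) (b : ℤ)
    (hn₂ : 2 ≤ n₂) (hn : n₂ < n₁) (hb : 2 ≤ b) (hm₂ : 1 ≤ m₂) (hm : m₂ < m₁)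
    (heq : T n₁ - T n₂ = b ^ m₁ - b ^ m₂) :
    (b : ℝ) ^ m₁ ≥ 0.13 * α ^ n₁ :=
  tribonacci_pillai_lower_general T hT1 hT2 hT3 hTrec α hα hα1 n₁ n₂ m₁ m₂ b hn₂ hn hb heq
end
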